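/- Let f : ℝ^m → ℝ be C¹ with at most countably many critical points (for example, a Morse function), let α, β ∈ (0,1), δ₀ > 0, and let (x_n) be the backtracking gradient descent sequence from an arbitrary initial point x₀ ∈ ℝ^m. Then either (x_n) converges to a critical point of f, or (x_n) diverges to infinity (tends to the cocompact filter of ℝ^m). If moreover f has compact sublevel sets {x : f(x) ≤ c}, then only the former alternative happens: (x_n) converges to a critical point of f. -/

import Mathlib

/-!
Armijo's condition makes `f` decrease along the sequence. Near a non-critical point `z` it holds
for every step size below a fixed bound, so there the backtracking rate is bounded below and each
step decreases `f` by a fixed amount; as `f (x n)` stays above `f z` for every cluster point `z`,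
every cluster point is critical. Once there is a cluster point, `f ∘ x` is bounded below and the
step lengths tend to `0`. If `x` then does not converge to its cluster point `z`, the distance
`dist (x n) z` oscillates between values near `0` and values `≥ ε` with steps tending to `0`, so
every sphere around `z` of radius `r ∈ (0, ε)` carries a cluster point: uncountably many critical
points.
-/

open Gradient

/-- Armijo's condition at `x` for step size `δ`:
`f(x − δ∇f(x)) − f(x) ≤ −αδ‖∇f(x)‖²`. -/
def ArmijoCondition {E : Type*} [NormedAddCommGroup E] [InnerProductSpace ℝ E]
    [CompleteSpace E] (f : E → ℝ) (α δ : ℝ) (x : E) : Prop :=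
  f (x - δ • ∇ f x) - f x ≤ -(α * δ * ‖∇ f x‖ ^ 2)

/-- `δsel` is the backtracking learning rate function: `δsel x` is the largest number of the
form `β^j δ₀` (i.e. the one with the smallest exponent `j`) satisfying Armijo's condition
at `x`. -/
def IsBacktrackingRate {E : Type*} [NormedAddCommGroup E] [InnerProductSpace ℝ E]
    [CompleteSpace E] (f : E → ℝ) (α β δ₀ : ℝ) (δsel : E → ℝ) : Prop :=
  ∀ x : E, ∃ j : ℕ, δsel x = β ^ j * δ₀ ∧ ArmijoCondition f α (δsel x) x ∧
    ∀ i < j, ¬ ArmijoCondition f α (β ^ i * δ₀) x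

open Filter Topology Metric Set

section Sequences

theorem Nat.exists_between_and_not_succ {P : ℕ → Prop} {a b : ℕ} (hab : a ≤ b) (ha : P a)
    (hb : ¬ P b) : ∃ k, a ≤ k ∧ P k ∧ ¬ P (k + 1) := by
  by_contra! hcon
  exact hb (Nat.le_induction ha hcon b hab)

theorem mapClusterPt_of_frequently_lt_of_frequently_le {g : ℕ → ℝ} {r : ℝ}
    (hstep : Tendsto (fun n => g (n + 1) - g n) atTop (𝓝 0))
    (hlt : ∃ᶠ n in atTop, g n < r) (hle : ∃ᶠ n in atTop, r ≤ g n) :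
    MapClusterPt r atTop g := by
  rw [nhds_basis_ball.mapClusterPt_iff_frequently]
  intro η hη
  rw [frequently_atTop]
  intro N
  obtain ⟨N', hN'⟩ := eventually_atTop.1 (hstep.eventually (ball_mem_nhds 0 hη))
  obtain ⟨a, ha, hga⟩ := frequently_atTop.1 hlt (max N N')
  obtain ⟨b, hab, hgb⟩ := frequently_atTop.1 hle a
  obtain ⟨k, hak, hk, hk1⟩ :=
    Nat.exists_between_and_not_succ (P := fun n => g n < r) hab hga hgb.not_gt
  have hkN' : N' ≤ k := by omega
  have hjump := abs_lt.1 (by simpa [Real.dist_eq] using hN' k hkN')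
  refine ⟨k + 1, by omega, ?_⟩
  rw [mem_ball, Real.dist_eq, abs_lt]
  constructor <;> linarith

variable {X : Type*}

theorem exists_mapClusterPt_of_not_tendsto_cocompact [TopologicalSpace X] {ι : Type*}
    {l : Filter ι} {x : ι → X} (h : ¬ Tendsto x l (cocompact X)) : ∃ z, MapClusterPt z l x := by
  rw [hasBasis_cocompact.tendsto_right_iff] at h
  push Not at h
  obtain ⟨K, hK, hfreq⟩ := h
  obtain ⟨z, -, hz⟩ := hK.exists_mapClusterPt_of_frequently (by simpa using hfreq)
  exact ⟨z, hz⟩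

theorem MapClusterPt.apply_le_of_antitone [TopologicalSpace X] {x : ℕ → X} {z : X}
    (hz : MapClusterPt z atTop x) {f : X → ℝ} (hf : Continuous f) (hanti : Antitone (f ∘ x))
    (n : ℕ) : f z ≤ f (x n) :=
  (isClosed_le hf continuous_const).mem_of_mapClusterPt hz
    (eventually_atTop.2 ⟨n, fun _ hk => hanti hk⟩)

variable [PseudoMetricSpace X] [ProperSpace X]

theorem exists_mapClusterPt_dist_eq {x : ℕ → X} {z : X} {r : ℝ}
    (h : MapClusterPt r atTop (fun n => dist (x n) z)) :
    ∃ w, MapClusterPt w atTop x ∧ dist w z = r := by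
  set F := map x atTop ⊓ comap (dist · z) (𝓝 r)
  have hF : F.NeBot := by
    rw [← map_neBot_iff (dist · z), Filter.push_pull, inf_comm]
    exact h
  have hFK : F ≤ 𝓟 (closedBall z (r + 1)) :=
    inf_le_right.trans <| le_principal_iff.2 <|
      mem_comap.2 ⟨Iio (r + 1), Iio_mem_nhds (by linarith), fun _ hy => mem_closedBall.2 hy.le⟩
  obtain ⟨w, -, hw⟩ := (isCompact_closedBall z (r + 1)).exists_clusterPt hFK
  have hdist : Tendsto (dist · z) F (𝓝 r) := tendsto_comap.mono_left inf_le_right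
  exact ⟨w, hw.mono inf_le_left, eq_of_nhds_neBot <|
    hw.map (continuous_id.dist continuous_const).continuousAt hdist⟩

theorem tendsto_of_mapClusterPt_of_countable {x : ℕ → X} {z : X} (hz : MapClusterPt z atTop x)
    (hstep : Tendsto (fun n => dist (x (n + 1)) (x n)) atTop (𝓝 0))
    (hcount : {w | MapClusterPt w atTop x}.Countable) : Tendsto x atTop (𝓝 z) := by
  by_contra hnot
  obtain ⟨ε, hε, hfar⟩ : ∃ ε > 0, ∃ᶠ n in atTop, ε ≤ dist (x n) z := by
    simpa [Metric.tendsto_atTop, frequently_atTop] using hnot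
  have hdist_step : Tendsto (fun n => dist (x (n + 1)) z - dist (x n) z) atTop (𝓝 0) :=
    squeeze_zero_norm (fun n => abs_dist_sub_le _ _ _) hstep
  have hsphere : Ioo 0 ε ⊆ (dist · z) '' {w | MapClusterPt w atTop x} := by
    rintro r ⟨hr0, hrε⟩
    exact exists_mapClusterPt_dist_eq <| mapClusterPt_of_frequently_lt_of_frequently_le hdist_step
      (hz.frequently (ball_mem_nhds z hr0)) (hfar.mono fun _ hn => hrε.le.trans hn)
  exact (Cardinal.Real.Ioo_countable_iff.1 ((hcount.image _).mono hsphere)).not_gt hε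

end Sequences

variable {E : Type*} [NormedAddCommGroup E] [InnerProductSpace ℝ E] [CompleteSpace E]
  {f : E → ℝ} {α β δ₀ : ℝ}

theorem ContDiff.continuous_gradient (hf : ContDiff ℝ 1 f) : Continuous (∇ f) :=
  (InnerProductSpace.toDual ℝ E).symm.continuous.comp (hf.continuous_fderiv one_ne_zero)

theorem armijoCondition_of_norm_gradient_sub_le {s : Set E} {y : E} {δ : ℝ} (hs : Convex ℝ s)
    (hf : ∀ u ∈ s, DifferentiableAt ℝ f u) (hy : y ∈ s) (hys : y - δ • ∇ f y ∈ s) (hδ : 0 ≤ δ)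
    (hbound : ∀ u ∈ s, ‖∇ f u - ∇ f y‖ ≤ (1 - α) * ‖∇ f y‖) : ArmijoCondition f α δ y := by
  set g := ∇ f y
  have hbound' : ∀ u ∈ s, ‖fderiv ℝ f u - fderiv ℝ f y‖ ≤ (1 - α) * ‖g‖ := fun u hu => by
    rw [← toDual_gradient, ← toDual_gradient, ← map_sub, LinearIsometryEquiv.norm_map]
    exact hbound u hu
  have hmvt := hs.norm_image_sub_le_of_norm_fderiv_le' hf hbound' hy hys
  have hlin : fderiv ℝ f y (y - δ • g - y) = -(δ * ‖g‖ ^ 2) := by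
    rw [sub_sub_cancel_left, map_neg, map_smul, ← inner_gradient_left,
      real_inner_self_eq_norm_sq, smul_eq_mul]
  have hlen : ‖y - δ • g - y‖ = δ * ‖g‖ := by
    rw [sub_sub_cancel_left, norm_neg, norm_smul, Real.norm_of_nonneg hδ]
  rw [hlin, hlen, Real.norm_eq_abs] at hmvt
  have := (abs_le.1 hmvt).2
  unfold ArmijoCondition
  linarith

theorem exists_forall_armijoCondition_nhds (hf : ContDiff ℝ 1 f) (hα : α < 1) {z : E}
    (hz : ∇ f z ≠ 0) : ∃ δ' > 0, ∀ᶠ y in 𝓝 z, ∀ δ ∈ Ioc 0 δ', ArmijoCondition f α δ y := by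
  set G := ‖∇ f z‖
  have hG : 0 < G := norm_pos_iff.2 hz
  set κ := min (G / 2) ((1 - α) * G / 4)
  have hα' : 0 < 1 - α := by linarith
  have hκ : 0 < κ := lt_min (by positivity) (by positivity)
  obtain ⟨r, hr, hclose⟩ := Metric.continuousAt_iff.1 hf.continuous_gradient.continuousAt κ hκ
  have hclose' : ∀ u ∈ ball z r, ‖∇ f u - ∇ f z‖ < κ := fun u hu => by
    rw [← dist_eq_norm]; exact hclose hu
  refine ⟨r / (2 * (G + κ)), by positivity, ?_⟩
  filter_upwards [ball_mem_nhds z (half_pos hr)] with y hy δ ⟨hδ0, hδ⟩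
  have hyr : y ∈ ball z r := ball_subset_ball (half_le_self hr.le) hy
  have hgy := hclose' y hyr
  have hgy_upper : ‖∇ f y‖ ≤ G + κ := by
    linarith [norm_le_insert' (∇ f y) (∇ f z)]
  have hgy_lower : G / 2 ≤ ‖∇ f y‖ := by
    linarith [norm_le_insert' (∇ f z) (∇ f y), norm_sub_rev (∇ f y) (∇ f z),
      min_le_left (G / 2) ((1 - α) * G / 4)]
  refine armijoCondition_of_norm_gradient_sub_le (convex_ball z r)
    (fun u _ => (hf.differentiable one_ne_zero).differentiableAt) hyr ?_ hδ0.le ?_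
  · have hstep : δ * ‖∇ f y‖ ≤ r / 2 := by
      calc δ * ‖∇ f y‖ ≤ r / (2 * (G + κ)) * (G + κ) := by gcongr
        _ = r / 2 := by field_simp
    rw [mem_ball] at hy ⊢
    calc dist (y - δ • ∇ f y) z ≤ dist (y - δ • ∇ f y) y + dist y z := dist_triangle _ _ _
      _ = δ * ‖∇ f y‖ + dist y z := by
          rw [dist_eq_norm, sub_sub_cancel_left, norm_neg, norm_smul, Real.norm_of_nonneg hδ0.le]
      _ < r := by linarith
  · intro u hu
    calc ‖∇ f u - ∇ f y‖ ≤ ‖∇ f u - ∇ f z‖ + ‖∇ f z - ∇ f y‖ :=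
          norm_sub_le_norm_sub_add_norm_sub _ _ _
      _ ≤ 2 * κ := by linarith [hclose' u hu, norm_sub_rev (∇ f z) (∇ f y)]
      _ ≤ (1 - α) * G / 2 := by linarith [min_le_right (G / 2) ((1 - α) * G / 4)]
      _ ≤ (1 - α) * ‖∇ f y‖ := by nlinarith

namespace IsBacktrackingRate

variable {δsel : E → ℝ}

theorem armijo (h : IsBacktrackingRate f α β δ₀ δsel) (y : E) : ArmijoCondition f α (δsel y) y :=
  let ⟨_, _, harm, _⟩ := h y
  harm

theorem pos (h : IsBacktrackingRate f α β δ₀ δsel) (hβ : 0 < β) (hδ₀ : 0 < δ₀) (y : E) :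
    0 < δsel y := by
  obtain ⟨j, hj, -⟩ := h y
  rw [hj]
  positivity

theorem le_init (h : IsBacktrackingRate f α β δ₀ δsel) (hβ0 : 0 ≤ β) (hβ1 : β ≤ 1)
    (hδ₀ : 0 ≤ δ₀) (y : E) : δsel y ≤ δ₀ := by
  obtain ⟨j, hj, -⟩ := h y
  rw [hj]
  exact mul_le_of_le_one_left hδ₀ (pow_le_one₀ hβ0 hβ1)

theorem min_le (h : IsBacktrackingRate f α β δ₀ δsel) (hβ : 0 < β) (hδ₀ : 0 < δ₀) {y : E}
    {δ' : ℝ} (harm : ∀ δ ∈ Ioc 0 δ', ArmijoCondition f α δ y) : min δ₀ (β * δ') ≤ δsel y := by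
  obtain ⟨j, hj, -, hfirst⟩ := h y
  rcases j with _ | k
  · simp [hj]
  · have hk : δ' < β ^ k * δ₀ := by
      by_contra! hle
      exact hfirst k k.lt_succ_self (harm _ ⟨by positivity, hle⟩)
    calc min δ₀ (β * δ') ≤ β * δ' := min_le_right _ _
      _ ≤ β * (β ^ k * δ₀) := by gcongr
      _ = δsel y := by rw [hj]; ring

end IsBacktrackingRate

section Descent

variable {δsel : E → ℝ} {x : ℕ → E}

theorem apply_succ_le (h : IsBacktrackingRate f α β δ₀ δsel)
    (hupd : ∀ n, x (n + 1) = x n - δsel (x n) • ∇ f (x n)) (n : ℕ) :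
    f (x (n + 1)) ≤ f (x n) - α * δsel (x n) * ‖∇ f (x n)‖ ^ 2 := by
  have := h.armijo (x n)
  unfold ArmijoCondition at this
  rw [hupd n]
  linarith

theorem antitone_apply (hα : 0 ≤ α) (hβ : 0 < β) (hδ₀ : 0 < δ₀)
    (h : IsBacktrackingRate f α β δ₀ δsel)
    (hupd : ∀ n, x (n + 1) = x n - δsel (x n) • ∇ f (x n)) : Antitone (f ∘ x) :=
  antitone_nat_of_succ_le fun n => by
    show f (x (n + 1)) ≤ f (x n)
    have := h.pos hβ hδ₀ (x n)
    have : 0 ≤ α * δsel (x n) * ‖∇ f (x n)‖ ^ 2 := by positivity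
    linarith [apply_succ_le h hupd n]

theorem dist_succ_sq_le (hα : 0 < α) (hβ0 : 0 < β) (hβ1 : β ≤ 1) (hδ₀ : 0 < δ₀)
    (h : IsBacktrackingRate f α β δ₀ δsel)
    (hupd : ∀ n, x (n + 1) = x n - δsel (x n) • ∇ f (x n)) (n : ℕ) :
    dist (x (n + 1)) (x n) ^ 2 ≤ δ₀ / α * (f (x n) - f (x (n + 1))) := by
  set δ := δsel (x n)
  set g := ‖∇ f (x n)‖
  have hδ := h.pos hβ0 hδ₀ (x n)
  have hdist : dist (x (n + 1)) (x n) = δ * g := by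
    rw [hupd n, dist_eq_norm, sub_sub_cancel_left, norm_neg, norm_smul, Real.norm_of_nonneg hδ.le]
  rw [hdist, div_mul_eq_mul_div, le_div_iff₀ hα]
  calc (δ * g) ^ 2 * α = δ * (α * δ * g ^ 2) := by ring
    _ ≤ δ₀ * (f (x n) - f (x (n + 1))) := by
      gcongr
      · exact h.le_init hβ0.le hβ1 hδ₀.le (x n)
      · linarith [apply_succ_le h hupd n]

theorem tendsto_dist_succ_zero (hα : 0 < α) (hβ0 : 0 < β) (hβ1 : β ≤ 1) (hδ₀ : 0 < δ₀)
    (h : IsBacktrackingRate f α β δ₀ δsel)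
    (hupd : ∀ n, x (n + 1) = x n - δsel (x n) • ∇ f (x n)) (hbdd : BddBelow (range (f ∘ x))) :
    Tendsto (fun n => dist (x (n + 1)) (x n)) atTop (𝓝 0) := by
  have hlim := tendsto_atTop_ciInf (antitone_apply hα.le hβ0 hδ₀ h hupd) hbdd
  have hdecr : Tendsto (fun n => δ₀ / α * (f (x n) - f (x (n + 1)))) atTop (𝓝 0) := by
    simpa using (hlim.sub (hlim.comp (tendsto_add_atTop_nat 1))).const_mul (δ₀ / α)
  refine squeeze_zero (fun _ => dist_nonneg)
    (fun n => Real.le_sqrt_of_sq_le (dist_succ_sq_le hα hβ0 hβ1 hδ₀ h hupd n)) ?_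
  have := (Real.continuous_sqrt.tendsto 0).comp hdecr
  rwa [Real.sqrt_zero] at this

theorem gradient_eq_zero_of_mapClusterPt (hf : ContDiff ℝ 1 f) (hα0 : 0 < α) (hα1 : α < 1)
    (hβ : 0 < β) (hδ₀ : 0 < δ₀) (h : IsBacktrackingRate f α β δ₀ δsel)
    (hupd : ∀ n, x (n + 1) = x n - δsel (x n) • ∇ f (x n)) {z : E}
    (hz : MapClusterPt z atTop x) : ∇ f z = 0 := by
  by_contra hz0
  obtain ⟨δ', hδ', harm⟩ := exists_forall_armijoCondition_nhds hf hα1 hz0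
  set G := ‖∇ f z‖ / 2
  have hG : 0 < G := half_pos (norm_pos_iff.2 hz0)
  set c := α * min δ₀ (β * δ') * G ^ 2
  have hc : 0 < c := by have := lt_min hδ₀ (mul_pos hβ hδ'); positivity
  have hgrad : ∀ᶠ y in 𝓝 z, G < ‖∇ f y‖ :=
    continuousAt_const.eventually_lt hf.continuous_gradient.norm.continuousAt (half_lt_self
      (norm_pos_iff.2 hz0))
  have hval : ∀ᶠ y in 𝓝 z, f y < f z + c :=
    hf.continuous.continuousAt.eventually_lt continuousAt_const (by linarith)
  -- near `z` a backtracking step decreases `f` by at least `c`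
  have hbelow : ∀ᶠ y in 𝓝 z, f (y - δsel y • ∇ f y) < f z := by
    filter_upwards [harm, hgrad, hval] with y hyarm hyg hyv
    have hdecr : c ≤ α * δsel y * ‖∇ f y‖ ^ 2 := by
      change α * min δ₀ (β * δ') * G ^ 2 ≤ _
      have := h.pos hβ hδ₀ y
      gcongr
      exact h.min_le hβ hδ₀ hyarm
    have := h.armijo y
    unfold ArmijoCondition at this
    linarith
  obtain ⟨n, hn⟩ := (hz.frequently hbelow).exists
  rw [← hupd n] at hn
  exact hn.not_ge (hz.apply_le_of_antitone hf.continuous (antitone_apply hα0.le hβ hδ₀ h hupd)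
    (n + 1))

theorem exists_tendsto_of_not_tendsto_cocompact [ProperSpace E] (hf : ContDiff ℝ 1 f)
    (hcount : {y : E | ∇ f y = 0}.Countable) (hα0 : 0 < α) (hα1 : α < 1) (hβ0 : 0 < β)
    (hβ1 : β ≤ 1) (hδ₀ : 0 < δ₀) (h : IsBacktrackingRate f α β δ₀ δsel)
    (hupd : ∀ n, x (n + 1) = x n - δsel (x n) • ∇ f (x n))
    (hx : ¬ Tendsto x atTop (cocompact E)) : ∃ p, ∇ f p = 0 ∧ Tendsto x atTop (𝓝 p) := by
  obtain ⟨z, hz⟩ := exists_mapClusterPt_of_not_tendsto_cocompact hx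
  have hcrit : ∀ w, MapClusterPt w atTop x → ∇ f w = 0 := fun w hw =>
    gradient_eq_zero_of_mapClusterPt hf hα0 hα1 hβ0 hδ₀ h hupd hw
  have hbdd : BddBelow (range (f ∘ x)) := ⟨f z, forall_mem_range.2 <|
    hz.apply_le_of_antitone hf.continuous (antitone_apply hα0.le hβ0 hδ₀ h hupd)⟩
  exact ⟨z, hcrit z hz, tendsto_of_mapClusterPt_of_countable hz
    (tendsto_dist_succ_zero hα0 hβ0 hβ1 hδ₀ h hupd hbdd) (hcount.mono hcrit)⟩

end Descent

/-- Let `f : ℝ^m → ℝ` be `C¹` with at most countably many critical points,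
`α, β ∈ (0,1)`, `δ₀ > 0`, and `(x n)` the backtracking gradient descent sequence from an
arbitrary initial point. Then either `(x n)` converges to a critical point of `f`, or `(x n)`
diverges to infinity (tends to the cocompact filter). If moreover `f` has compact sublevel
sets, then `(x n)` converges to a critical point of `f`. -/
theorem backtracking_GD_converges_or_diverges
    {m : ℕ} (f : EuclideanSpace ℝ (Fin m) → ℝ) (hf : ContDiff ℝ 1 f)
    (hcount : {y : EuclideanSpace ℝ (Fin m) | ∇ f y = 0}.Countable)
    (α β δ₀ : ℝ) (hα0 : 0 < α) (hα1 : α < 1) (hβ0 : 0 < β) (hβ1 : β < 1) (hδ₀ : 0 < δ₀)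
    (δsel : EuclideanSpace ℝ (Fin m) → ℝ) (hδsel : IsBacktrackingRate f α β δ₀ δsel)
    (x : ℕ → EuclideanSpace ℝ (Fin m))
    (hupd : ∀ n, x (n + 1) = x n - δsel (x n) • ∇ f (x n)) :
    ((∃ p, ∇ f p = 0 ∧ Filter.Tendsto x Filter.atTop (nhds p)) ∨
      Filter.Tendsto x Filter.atTop (Filter.cocompact (EuclideanSpace ℝ (Fin m)))) ∧
    ((∀ c : ℝ, IsCompact {y | f y ≤ c}) →
      ∃ p, ∇ f p = 0 ∧ Filter.Tendsto x Filter.atTop (nhds p)) := by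
  have hconv := exists_tendsto_of_not_tendsto_cocompact hf hcount hα0 hα1 hβ0 hβ1.le hδ₀ hδsel hupd
  refine ⟨or_iff_not_imp_right.2 hconv, fun hsublevel => hconv fun hdiv => ?_⟩
  -- the sequence never leaves the compact sublevel set of `f (x 0)`
  obtain ⟨n, hn⟩ := (hdiv.eventually (hsublevel (f (x 0))).compl_mem_cocompact).exists
  exact hn (antitone_apply hα0.le hβ0 hδ₀ hδsel hupd (Nat.zero_le n))
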